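/- (Smoothed form of Proposition 1.) Let D ⊆ ℝ^d be Lebesgue measurable, η > 0, H_η the smoothed Heaviside function, f : ℝ^d → ℝ integrable on D, and φ, v : ℝ^d → ℝ measurable with v·f integrable on D. Assume φ is differentiable almost everywhere on D with |∇φ(x)| = 1 for almost every x ∈ D. Define Ĵ(ψ) = ∫_D (1 − H_η(ψ(x)))·f(x) dx. Then the derivative of t ↦ Ĵ(φ + t·v) at t = 0 equals −∫_D v(x)·f(x)·H_η'(φ(x))·|∇φ(x)| dx, i.e. the Gateaux derivative of the relaxed functional coincides with the relaxation over D of the shape derivative J'(Ω)(−v·n) = −∫_{∂Ω} v·f ds. -/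

import Mathlib

/-!
On each of the closed pieces `(-∞, -η]`, `[-η, η]`, `[η, ∞)` the function `H_η` agrees with a
smooth function whose derivative is `H_η'`; as the pieces are closed and cover `ℝ`, `H_η'` is the
derivative of `H_η` everywhere, and `0 ≤ H_η' ≤ 1/η` makes `H_η` monotone with values in `[0, 1]`.
Differentiating `t ↦ ∫_D (1 - H_η(φ + t v)) f` under the integral sign is then justified by the
integrable bound `|v f| / η` on the `t`-derivative of the integrand, and `|∇φ| = 1` a.e. turns the
result into the relaxed boundary integral.
-/

open MeasureTheory

/-- The smoothed Heaviside function `H_η` with smoothing parameter `η > 0`. -/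
noncomputable def smoothedHeaviside (η t : ℝ) : ℝ :=
  if t < -η then 0
  else if |t| ≤ η then 1/2 + t/(2*η) + (1/(2*Real.pi)) * Real.sin (Real.pi * t / η)
  else 1

/-- The derivative of the smoothed Heaviside function. -/
noncomputable def smoothedHeavisideDeriv (η t : ℝ) : ℝ :=
  if |t| ≤ η then (1 + Real.cos (Real.pi * t / η)) / (2*η) else 0

open Set

lemma hasDerivWithinAt_of_isClosed {f f' : ℝ → ℝ} {s : Set ℝ} (hs : IsClosed s)
    (h : ∀ t ∈ s, HasDerivWithinAt f (f' t) s t) (t : ℝ) : HasDerivWithinAt f (f' t) s t := by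
  by_cases ht : t ∈ s
  · exact h t ht
  · exact HasFDerivWithinAt.of_notMem_closure (by rwa [hs.closure_eq])

section SmoothedHeaviside

variable {η t : ℝ}

lemma smoothedHeaviside_eq_zero (hη : 0 < η) (ht : t ≤ -η) : smoothedHeaviside η t = 0 := by
  rcases ht.lt_or_eq with ht | rfl
  · simp [smoothedHeaviside, ht]
  · simp only [smoothedHeaviside, lt_irrefl, if_false, abs_neg, abs_of_pos hη, le_refl, if_true,
      mul_neg, neg_div, mul_div_assoc, div_self hη.ne', mul_one, Real.sin_neg, Real.sin_pi]
    field_simp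
    ring

lemma smoothedHeaviside_eq_one (hη : 0 < η) (ht : η ≤ t) : smoothedHeaviside η t = 1 := by
  rcases ht.lt_or_eq with ht | rfl
  · have hneg : ¬ t < -η := by linarith
    have habs : ¬ |t| ≤ η := not_le.mpr (ht.trans_le (le_abs_self t))
    simp [smoothedHeaviside, hneg, habs]
  · have hneg : ¬ η < -η := by linarith
    simp only [smoothedHeaviside, hneg, if_false, abs_of_pos hη, le_refl, if_true,
      mul_div_assoc, div_self hη.ne', mul_one, Real.sin_pi]
    field_simp
    ring

lemma smoothedHeavisideDeriv_eq_zero (hη : 0 < η) (ht : η ≤ |t|) :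
    smoothedHeavisideDeriv η t = 0 := by
  unfold smoothedHeavisideDeriv
  split_ifs with h
  · rw [← Real.cos_abs, abs_div, abs_mul, abs_of_pos Real.pi_pos, le_antisymm h ht,
      abs_of_pos hη, mul_div_assoc, div_self hη.ne', mul_one, Real.cos_pi]
    ring
  · rfl

lemma smoothedHeavisideDeriv_nonneg (hη : 0 < η) (t : ℝ) : 0 ≤ smoothedHeavisideDeriv η t := by
  unfold smoothedHeavisideDeriv
  split_ifs
  · exact div_nonneg (by linarith [Real.neg_one_le_cos (Real.pi * t / η)]) (by positivity)
  · rfl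

lemma smoothedHeavisideDeriv_le (hη : 0 < η) (t : ℝ) : smoothedHeavisideDeriv η t ≤ 1 / η := by
  unfold smoothedHeavisideDeriv
  split_ifs
  · calc (1 + Real.cos (Real.pi * t / η)) / (2 * η) ≤ 2 / (2 * η) := by
          gcongr; linarith [Real.cos_le_one (Real.pi * t / η)]
      _ = 1 / η := by field_simp
  · positivity

lemma hasDerivWithinAt_smoothedHeaviside_Iic (hη : 0 < η) (ht : t ∈ Iic (-η)) :
    HasDerivWithinAt (smoothedHeaviside η) (smoothedHeavisideDeriv η t) (Iic (-η)) t := by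
  rw [smoothedHeavisideDeriv_eq_zero hη (le_abs.mpr (Or.inr (by linarith [mem_Iic.mp ht])))]
  exact (hasDerivWithinAt_const t _ 0).congr_of_mem
    (fun s hs => smoothedHeaviside_eq_zero hη hs) ht

lemma hasDerivWithinAt_smoothedHeaviside_Ici (hη : 0 < η) (ht : t ∈ Ici η) :
    HasDerivWithinAt (smoothedHeaviside η) (smoothedHeavisideDeriv η t) (Ici η) t := by
  rw [smoothedHeavisideDeriv_eq_zero hη ((mem_Ici.mp ht).trans (le_abs_self t))]
  exact (hasDerivWithinAt_const t _ 1).congr_of_mem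
    (fun s hs => smoothedHeaviside_eq_one hη hs) ht

lemma hasDerivWithinAt_smoothedHeaviside_Icc (hη : 0 < η) (ht : t ∈ Icc (-η) η) :
    HasDerivWithinAt (smoothedHeaviside η) (smoothedHeavisideDeriv η t) (Icc (-η) η) t := by
  have hmiddle : HasDerivAt
      (fun s => 1/2 + s/(2*η) + (1/(2*Real.pi)) * Real.sin (Real.pi * s / η))
      (1 / (2*η) + (1/(2*Real.pi)) * (Real.cos (Real.pi * t / η) * (Real.pi / η))) t := by
    have hinner : HasDerivAt (fun s => Real.pi * s / η) (Real.pi / η) t := by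
      simpa using ((hasDerivAt_id t).const_mul Real.pi).div_const η
    exact (((hasDerivAt_id t).div_const (2*η)).const_add _).add (hinner.sin.const_mul _)
  have hderiv : smoothedHeavisideDeriv η t =
      1 / (2*η) + (1/(2*Real.pi)) * (Real.cos (Real.pi * t / η) * (Real.pi / η)) := by
    rw [smoothedHeavisideDeriv, if_pos (abs_le.mpr ht)]
    field_simp [Real.pi_ne_zero]
  rw [hderiv]
  refine hmiddle.hasDerivWithinAt.congr_of_mem (fun s hs => ?_) ht
  rw [smoothedHeaviside, if_neg (not_lt.mpr hs.1), if_pos (abs_le.mpr hs)]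

theorem hasDerivAt_smoothedHeaviside (hη : 0 < η) (t : ℝ) :
    HasDerivAt (smoothedHeaviside η) (smoothedHeavisideDeriv η t) t := by
  have hleft := hasDerivWithinAt_of_isClosed isClosed_Iic
    (fun _ => hasDerivWithinAt_smoothedHeaviside_Iic hη) t
  have hmiddle := hasDerivWithinAt_of_isClosed isClosed_Icc
    (fun _ => hasDerivWithinAt_smoothedHeaviside_Icc hη) t
  have hright := hasDerivWithinAt_of_isClosed isClosed_Ici
    (fun _ => hasDerivWithinAt_smoothedHeaviside_Ici hη) t
  have hcover : Iic (-η) ∪ Icc (-η) η ∪ Ici η = univ := by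
    rw [Iic_union_Icc_eq_Iic (by linarith), Iic_union_Ici]
  simpa [hcover, hasDerivWithinAt_univ] using (hleft.union hmiddle).union hright

lemma monotone_smoothedHeaviside (hη : 0 < η) : Monotone (smoothedHeaviside η) :=
  monotone_of_hasDerivAt_nonneg (hasDerivAt_smoothedHeaviside hη) (smoothedHeavisideDeriv_nonneg hη)

lemma abs_one_sub_smoothedHeaviside_le (hη : 0 < η) (t : ℝ) :
    |1 - smoothedHeaviside η t| ≤ 1 := by
  have hlower : 0 ≤ smoothedHeaviside η t := by
    rw [← smoothedHeaviside_eq_zero hη (min_le_right t (-η))]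
    exact monotone_smoothedHeaviside hη (min_le_left t (-η))
  have hupper : smoothedHeaviside η t ≤ 1 := by
    rw [← smoothedHeaviside_eq_one hη (le_max_right t η)]
    exact monotone_smoothedHeaviside hη (le_max_left t η)
  rw [abs_le]
  constructor <;> linarith

end SmoothedHeaviside

theorem hasDerivAt_integral_comp_add_mul_mul {α : Type*} [MeasurableSpace α] {μ : Measure α}
    {G G' : ℝ → ℝ} {C L : ℝ} {φ v f : α → ℝ}
    (hG : ∀ s, HasDerivAt G (G' s) s) (hGC : ∀ s, |G s| ≤ C) (hG'L : ∀ s, |G' s| ≤ L)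
    (hφ : AEMeasurable φ μ) (hv : AEMeasurable v μ)
    (hf : Integrable f μ) (hvf : Integrable (fun x => v x * f x) μ) (t₀ : ℝ) :
    HasDerivAt (fun t => ∫ x, G (φ x + t * v x) * f x ∂μ)
      (∫ x, G' (φ x + t₀ * v x) * v x * f x ∂μ) t₀ := by
  have hGcont : Continuous G := continuous_iff_continuousAt.2 fun s => (hG s).continuousAt
  have hG'meas : Measurable G' := by
    rw [show G' = deriv G from funext fun s => (hG s).deriv.symm]
    exact measurable_deriv G
  have hline : ∀ t, AEMeasurable (fun x => φ x + t * v x) μ := fun t =>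
    hφ.add (hv.const_mul t)
  refine (hasDerivAt_integral_of_dominated_loc_of_deriv_le (Metric.ball_mem_nhds t₀ one_pos)
    (F := fun t x => G (φ x + t * v x) * f x) (F' := fun t x => G' (φ x + t * v x) * v x * f x)
    (bound := fun x => L * |v x * f x|) ?_ ?_ ?_ ?_ (hvf.abs.const_mul L) ?_).2
  · exact Filter.Eventually.of_forall fun t =>
      (hGcont.measurable.comp_aemeasurable (hline t)).aestronglyMeasurable.mul hf.1
  · exact hf.bdd_mul (hGcont.measurable.comp_aemeasurable (hline t₀)).aestronglyMeasurable
      (ae_of_all _ fun x => hGC _)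
  · exact ((hG'meas.comp_aemeasurable (hline t₀)).mul hv).aestronglyMeasurable.mul hf.1
  · refine ae_of_all _ fun x t _ => ?_
    rw [Real.norm_eq_abs, mul_assoc, abs_mul]
    exact mul_le_mul_of_nonneg_right (hG'L _) (abs_nonneg _)
  · refine ae_of_all _ fun x t _ => ?_
    have hinner : HasDerivAt (fun t => φ x + t * v x) (v x) t := by
      simpa using ((hasDerivAt_id t).mul_const (v x)).const_add (φ x)
    exact ((hG _).comp t hinner).mul_const (f x)

theorem hasDerivAt_relaxed_functional_signed_distance_general {d : ℕ}
    (D : Set (EuclideanSpace ℝ (Fin d)))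
    (η : ℝ) (hη : 0 < η)
    (f φ v : EuclideanSpace ℝ (Fin d) → ℝ)
    (hφ : Measurable φ) (hv : Measurable v)
    (hf : IntegrableOn f D)
    (hvf : IntegrableOn (fun x => v x * f x) D)
    (hgrad : ∀ᵐ x ∂(volume.restrict D), DifferentiableAt ℝ φ x ∧ ‖fderiv ℝ φ x‖ = 1) :
    HasDerivAt (fun t : ℝ => ∫ x in D, (1 - smoothedHeaviside η (φ x + t * v x)) * f x)
      (-∫ x in D, v x * f x * smoothedHeavisideDeriv η (φ x) * ‖fderiv ℝ φ x‖) 0 := by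
  have hderiv := hasDerivAt_integral_comp_add_mul_mul
    (G := fun s => 1 - smoothedHeaviside η s) (G' := fun s => -smoothedHeavisideDeriv η s)
    (fun s => (hasDerivAt_smoothedHeaviside hη s).const_sub 1)
    (abs_one_sub_smoothedHeaviside_le hη)
    (fun s => by
      rw [abs_neg, abs_of_nonneg (smoothedHeavisideDeriv_nonneg hη s)]
      exact smoothedHeavisideDeriv_le hη s)
    hφ.aemeasurable hv.aemeasurable hf hvf 0
  refine hderiv.congr_deriv ?_
  rw [← integral_neg]
  refine integral_congr_ae ?_
  filter_upwards [hgrad] with x hx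
  simp only [zero_mul, add_zero, hx.2]
  ring

/-- Smoothed form of Proposition 1: if `φ` is differentiable a.e. on `D` with `|∇φ| = 1`
a.e. on `D`, then the Gateaux derivative at `t = 0` of `t ↦ Ĵ(φ + t v)`, where
`Ĵ(ψ) = ∫_D (1 − H_η(ψ)) f dx`, equals `−∫_D v f H_η'(φ) |∇φ| dx`, i.e. the relaxation
over `D` of the shape derivative `J'(Ω)(−v n) = −∫_{∂Ω} v f ds`. -/
theorem hasDerivAt_relaxed_functional_signed_distance {d : ℕ}
    (D : Set (EuclideanSpace ℝ (Fin d))) (hD : MeasurableSet D)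
    (η : ℝ) (hη : 0 < η)
    (f φ v : EuclideanSpace ℝ (Fin d) → ℝ)
    (hφ : Measurable φ) (hv : Measurable v)
    (hf : IntegrableOn f D)
    (hvf : IntegrableOn (fun x => v x * f x) D)
    (hgrad : ∀ᵐ x ∂(volume.restrict D), DifferentiableAt ℝ φ x ∧ ‖fderiv ℝ φ x‖ = 1) :
    HasDerivAt (fun t : ℝ => ∫ x in D, (1 - smoothedHeaviside η (φ x + t * v x)) * f x)
      (-∫ x in D, v x * f x * smoothedHeavisideDeriv η (φ x) * ‖fderiv ℝ φ x‖) 0 :=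
  hasDerivAt_relaxed_functional_signed_distance_general D η hη f φ v hφ hv hf hvf hgrad
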